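/- arXiv:1006.2211 — 3 statements merged into one kernel-verified Lean document; each statement's English description precedes it below -/
import Mathlib

section
/- Let H be a complex Hilbert space, let ϑ = (ϑ_t)_{t≥0} be a family of unital star-algebra endomorphisms of B(H) with ϑ_0 = id and ϑ_{s+t} = ϑ_s ∘ ϑ_t for all s,t ≥ 0, and let Q ∈ B(H) be an orthogonal projection (self-adjoint idempotent) that is increasing for ϑ, i.e. Q ≤ ϑ_t(Q) for all t ≥ 0. Then for every a ∈ B(H) and every t ≥ 0 one has Q ϑ_t(Q a Q) Q = Q ϑ_t(a) Q; in other words, the compressed maps T_t are well defined on the corner Q B(H) Q by T_t(QaQ) = Q ϑ_t(a) Q. -/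
/-- If `P` and `Q` are projections with `Q ≤ P`, then `P * Q = Q`. -/
theorem proj_absorb {H : Type*} [NormedAddCommGroup H] [InnerProductSpace ℂ H]
    [CompleteSpace H] (P Q : H →L[ℂ] H)
    (hPsa : star P = P) (hPidem : P * P = P)
    (hQsa : star Q = Q) (hQidem : Q * Q = Q)
    (hle : Q ≤ P) : P * Q = Q := by
  have h1 : (1 : H →L[ℂ] H) - P ≤ 1 - Q := sub_le_sub_left hle 1
  have h2 : star Q * (1 - P) * Q ≤ star Q * (1 - Q) * Q := star_left_conjugate_le_conjugate h1 Q
  have h3 : star Q * (1 - Q) * Q = 0 := by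
    rw [hQsa]; simp [mul_sub, sub_mul, hQidem]
  have key : star ((1 - P) * Q) * ((1 - P) * Q) = star Q * (1 - P) * Q := by
    have hst : star ((1:H →L[ℂ] H) - P) = 1 - P := by simp [hPsa]
    rw [star_mul, hst]
    have h5 : ((1:H →L[ℂ] H) - P) * ((1 - P) * Q) = (1 - P) * Q := by
      rw [← mul_assoc]
      congr 1
      simp [mul_sub, sub_mul, hPidem]
    rw [mul_assoc, h5, ← mul_assoc]
  have h6 : (1 - P) * Q = 0 := by
    rw [← CStarRing.star_mul_self_eq_zero_iff]
    exact le_antisymm (key ▸ (h3 ▸ h2)) (star_mul_self_nonneg _)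
  have := sub_mul (1 : H →L[ℂ] H) P Q
  rw [h6, one_mul] at this
  exact (sub_eq_zero.mp this.symm).symm

/-- **Compression is well defined on the corner.**
If `ϑ = (ϑ_t)_{t ≥ 0}` is an (algebraic) E₀-semigroup on `B(H)` (a family of unital
star-algebra endomorphisms with `ϑ 0 = id` and `ϑ (s+t) = ϑ s ∘ ϑ t`) and `Q` is an
orthogonal projection that is increasing for `ϑ` (i.e. `Q ≤ ϑ t Q` in the Loewner order
for all `t`), then `Q * ϑ t (Q * a * Q) * Q = Q * ϑ t a * Q` for all `a` and `t`, so the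
compressed maps `T_t (Q a Q) := Q ϑ_t(a) Q` are well defined on the corner `Q B(H) Q`. -/
theorem compression_well_defined
    {H : Type*} [NormedAddCommGroup H] [InnerProductSpace ℂ H] [CompleteSpace H]
    (ϑ : NNReal → ((H →L[ℂ] H) →⋆ₐ[ℂ] (H →L[ℂ] H)))
    (h0 : ϑ 0 = StarAlgHom.id ℂ (H →L[ℂ] H))
    (hsemi : ∀ s t : NNReal, ϑ (s + t) = (ϑ s).comp (ϑ t))
    (Q : H →L[ℂ] H) (hQsa : IsSelfAdjoint Q) (hQidem : Q * Q = Q)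
    (hQinc : ∀ t : NNReal, Q ≤ ϑ t Q) :
    ∀ (a : H →L[ℂ] H) (t : NNReal),
      Q * ϑ t (Q * a * Q) * Q = Q * ϑ t a * Q := by
  intro a t
  set P : H →L[ℂ] H := ϑ t Q with hP
  have hPsa : star P = P := by rw [hP, ← map_star]; rw [hQsa.star_eq]
  have hPidem : P * P = P := by rw [hP, ← map_mul, hQidem]
  have hPQ : P * Q = Q := proj_absorb P Q hPsa hPidem hQsa.star_eq hQidem (hQinc t)
  have hQP : Q * P = Q := by
    have := congrArg star hPQ
    rwa [star_mul, hPsa, hQsa.star_eq] at this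
  have : ϑ t (Q * a * Q) = P * ϑ t a * P := by
    rw [map_mul, map_mul]
  rw [this]
  calc Q * (P * ϑ t a * P) * Q = (Q * P) * ϑ t a * (P * Q) := by simp only [mul_assoc]
  _ = Q * ϑ t a * Q := by rw [hPQ, hQP]
end

section
/- Let H be a complex Hilbert space, let ϑ = (ϑ_t)_{t≥0} be a family of unital star-algebra endomorphisms of B(H) with ϑ_0 = id and ϑ_{s+t} = ϑ_s ∘ ϑ_t, and let Q ∈ B(H) be an orthogonal projection with Q ≤ ϑ_t(Q) for all t ≥ 0. Then the compressed maps satisfy the semigroup law: for all a ∈ B(H) and all s, t ≥ 0, Q ϑ_s( Q ϑ_t(a) Q ) Q = Q ϑ_{s+t}(a) Q. -/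
/-! `ϑ_s(Q)` is a projection dominating `Q`, so `Q ϑ_s(Q) = Q = ϑ_s(Q) Q`; hence the inner
copies of `Q` in `Q ϑ_s(Q ϑ_t(a) Q) Q` are absorbed, and `ϑ_s ∘ ϑ_t = ϑ_{s+t}` finishes. -/

lemma IsStarProjection.mul_map_mul_mul_of_le_map
    {A F : Type*} [NonUnitalCStarAlgebra A] [PartialOrder A] [StarOrderedRing A]
    [FunLike F A A] [StarHomClass F A A] [MulHomClass F A A]
    {q : A} (hq : IsStarProjection q) (f : F) (hle : q ≤ f q) (x : A) :
    q * f (q * x * q) * q = q * f x * q := by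
  have hfq : IsStarProjection (f q) := hq.map f
  have hqf : q * f q = q := (hq.le_iff_mul_eq_left hfq).mp hle
  have hfq_q : f q * q = q := (hq.le_iff_mul_eq_right hfq).mp hle
  calc q * f (q * x * q) * q = (q * f q) * f x * (f q * q) := by simp only [map_mul, mul_assoc]
    _ = q * f x * q := by rw [hqf, hfq_q]

theorem compression_semigroup_law_general
    {H : Type*} [NormedAddCommGroup H] [InnerProductSpace ℂ H] [CompleteSpace H]
    (ϑ : NNReal → ((H →L[ℂ] H) →⋆ₐ[ℂ] (H →L[ℂ] H)))
    (hsemi : ∀ s t : NNReal, ϑ (s + t) = (ϑ s).comp (ϑ t))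
    (Q : H →L[ℂ] H) (hQsa : IsSelfAdjoint Q) (hQidem : Q * Q = Q)
    (hQinc : ∀ t : NNReal, Q ≤ ϑ t Q) :
    ∀ (a : H →L[ℂ] H) (s t : NNReal),
      Q * ϑ s (Q * ϑ t a * Q) * Q = Q * ϑ (s + t) a * Q := by
  intro a s t
  have hQ : IsStarProjection Q := ⟨hQidem, hQsa⟩
  rw [hsemi, StarAlgHom.comp_apply]
  exact hQ.mul_map_mul_mul_of_le_map (ϑ s) (hQinc s) (ϑ t a)

/-- **Semigroup law for the compression.**
If `ϑ = (ϑ_t)_{t ≥ 0}` is an (algebraic) E₀-semigroup on `B(H)` and `Q` is an orthogonal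
projection that is increasing for `ϑ`, then the compressed maps satisfy the semigroup law:
`Q * ϑ s (Q * ϑ t a * Q) * Q = Q * ϑ (s + t) a * Q` for all `a` and all `s, t ≥ 0`. -/
theorem compression_semigroup_law
    {H : Type*} [NormedAddCommGroup H] [InnerProductSpace ℂ H] [CompleteSpace H]
    (ϑ : NNReal → ((H →L[ℂ] H) →⋆ₐ[ℂ] (H →L[ℂ] H)))
    (h0 : ϑ 0 = StarAlgHom.id ℂ (H →L[ℂ] H))
    (hsemi : ∀ s t : NNReal, ϑ (s + t) = (ϑ s).comp (ϑ t))
    (Q : H →L[ℂ] H) (hQsa : IsSelfAdjoint Q) (hQidem : Q * Q = Q)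
    (hQinc : ∀ t : NNReal, Q ≤ ϑ t Q) :
    ∀ (a : H →L[ℂ] H) (s t : NNReal),
      Q * ϑ s (Q * ϑ t a * Q) * Q = Q * ϑ (s + t) a * Q :=
  compression_semigroup_law_general ϑ hsemi Q hQsa hQidem hQinc
end

section
/- Let H be a complex Hilbert space, let ϑ = (ϑ_t)_{t≥0} be a family of unital star-algebra endomorphisms of B(H) with ϑ_0 = id and ϑ_{s+t} = ϑ_s ∘ ϑ_t, and let Q ∈ B(H) be an orthogonal projection with Q ≤ ϑ_t(Q) for all t ≥ 0. Fix α ≥ 0, set Q_α := ϑ_α(Q), and suppose ϑ_α is injective. If for some t ≥ 0 the compression by Q_α is multiplicative at time t, i.e. Q_α ϑ_t(b b') Q_α = (Q_α ϑ_t(b) Q_α)(Q_α ϑ_t(b') Q_α) for all b, b' ∈ Q_α B(H) Q_α, then the compression by Q is multiplicative at time t, i.e. Q ϑ_t(QaQ · Qa'Q) Q = (Q ϑ_t(a) Q)(Q ϑ_t(a') Q) for all a, a' ∈ B(H). Equivalently, if the compression T by Q is not an endomorphism at time t (does not factor on some product), then neither is the compression T^α by Q_α. -/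
lemma proj_absorb_s5 {H : Type*} [NormedAddCommGroup H] [InnerProductSpace ℂ H] [CompleteSpace H]
    (P Q : H →L[ℂ] H) (hP : IsSelfAdjoint P) (hQ : IsSelfAdjoint Q)
    (hP2 : P * P = P) (hQ2 : Q * Q = Q) (h : Q ≤ P) : P * Q = Q := by
  have h1 : Q ≤ Q * P * Q := by
    have := star_left_conjugate_le_conjugate h Q
    rw [hQ.star_eq] at this
    rwa [hQ2, hQ2] at this
  have hsq : (1 - P) * (1 - P) = 1 - P := by
    rw [sub_mul, mul_sub, mul_sub, one_mul, mul_one, hP2, sub_self, sub_zero, one_mul]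
  have honemp : (1 - P) * ((1 - P) * Q) = (1 - P) * Q := by
    rw [← mul_assoc, hsq]
  have key : star ((1 - P) * Q) * ((1 - P) * Q) = Q - Q * P * Q := by
    rw [star_mul, hQ.star_eq, star_sub, star_one, hP.star_eq, mul_assoc, honemp, ← mul_assoc,
      mul_sub, mul_one, sub_mul, hQ2]
  have hle : star ((1 - P) * Q) * ((1 - P) * Q) ≤ 0 := by
    rw [key]; exact sub_nonpos.mpr h1
  have hge : (0 : H →L[ℂ] H) ≤ star ((1 - P) * Q) * ((1 - P) * Q) := star_mul_self_nonneg _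
  have h0 : (1 - P) * Q = 0 := by
    rw [← CStarRing.star_mul_self_eq_zero_iff]
    exact le_antisymm hle hge
  rw [sub_mul, one_mul] at h0
  exact (sub_eq_zero.mp h0).symm

/-- **Properness propagates backwards along `ϑ_α`.**
Let `ϑ = (ϑ_t)_{t ≥ 0}` be an (algebraic) E₀-semigroup on `B(H)`, let `Q` be an orthogonal
projection increasing for `ϑ`, fix `α ≥ 0`, set `Q_α := ϑ α Q`, and suppose `ϑ α` is
injective. If for some `t ≥ 0` the compression by `Q_α` is multiplicative at time `t`
(on the corner `Q_α B(H) Q_α`), then the compression by `Q` is multiplicative at time `t`.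
Contrapositively: if the compression `T` by `Q` is not an endomorphism at time `t`, then
neither is the compression `T^α` by `Q_α`. -/
theorem compression_multiplicative_of_image_multiplicative
    {H : Type*} [NormedAddCommGroup H] [InnerProductSpace ℂ H] [CompleteSpace H]
    (ϑ : NNReal → ((H →L[ℂ] H) →⋆ₐ[ℂ] (H →L[ℂ] H)))
    (h0 : ϑ 0 = StarAlgHom.id ℂ (H →L[ℂ] H))
    (hsemi : ∀ s t : NNReal, ϑ (s + t) = (ϑ s).comp (ϑ t))
    (Q : H →L[ℂ] H) (hQsa : IsSelfAdjoint Q) (hQidem : Q * Q = Q)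
    (hQinc : ∀ t : NNReal, Q ≤ ϑ t Q)
    (α : NNReal) (hinj : Function.Injective (ϑ α))
    (t : NNReal)
    (hmult : ∀ b b' : H →L[ℂ] H,
      b = ϑ α Q * b * ϑ α Q → b' = ϑ α Q * b' * ϑ α Q →
      ϑ α Q * ϑ t (b * b') * ϑ α Q
        = (ϑ α Q * ϑ t b * ϑ α Q) * (ϑ α Q * ϑ t b' * ϑ α Q)) :
    ∀ a a' : H →L[ℂ] H,
      Q * ϑ t ((Q * a * Q) * (Q * a' * Q)) * Q
        = (Q * ϑ t a * Q) * (Q * ϑ t a' * Q) := by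
  intro a a'
  have hQtsa : IsSelfAdjoint (ϑ t Q) := by
    show star (ϑ t Q) = ϑ t Q
    rw [← map_star, hQsa.star_eq]
  have hQtidem : ϑ t Q * ϑ t Q = ϑ t Q := by rw [← map_mul, hQidem]
  have habs : ϑ t Q * Q = Q := proj_absorb_s5 _ _ hQtsa hQsa hQtidem hQidem (hQinc t)
  have habs' : Q * ϑ t Q = Q := by
    have := congrArg star habs
    simpa [star_mul, hQsa.star_eq, hQtsa.star_eq] using this
  have compress : ∀ x : H →L[ℂ] H, Q * ϑ t (Q * x * Q) * Q = Q * ϑ t x * Q := by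
    intro x
    rw [map_mul, map_mul, ← mul_assoc, ← mul_assoc, habs', mul_assoc (Q * ϑ t x), habs,
      mul_assoc]
  have hcomm : ∀ x : H →L[ℂ] H, ϑ t (ϑ α x) = ϑ α (ϑ t x) := by
    intro x
    have h1 := congrArg (fun f => f x) (hsemi t α)
    have h2 := congrArg (fun f => f x) (hsemi α t)
    simp only [StarAlgHom.comp_apply] at h1 h2
    rw [← h1, add_comm, h2]
  have hsand : ∀ x : H →L[ℂ] H, Q * (Q * x * Q) * Q = Q * x * Q := by
    intro x
    simp only [← mul_assoc, hQidem]
    rw [mul_assoc, hQidem]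
  apply hinj
  have hb : ϑ α (Q * a * Q) = ϑ α Q * ϑ α (Q * a * Q) * ϑ α Q := by
    rw [← map_mul, ← map_mul, hsand a]
  have hb' : ϑ α (Q * a' * Q) = ϑ α Q * ϑ α (Q * a' * Q) * ϑ α Q := by
    rw [← map_mul, ← map_mul, hsand a']
  have key := hmult (ϑ α (Q * a * Q)) (ϑ α (Q * a' * Q)) hb hb'
  rw [← map_mul (ϑ α) (Q * a * Q), hcomm, hcomm, hcomm] at key
  calc ϑ α (Q * ϑ t (Q * a * Q * (Q * a' * Q)) * Q)
      = ϑ α Q * ϑ α (ϑ t (Q * a * Q * (Q * a' * Q))) * ϑ α Q := by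
        rw [map_mul, map_mul]
    _ = (ϑ α Q * ϑ α (ϑ t (Q * a * Q)) * ϑ α Q) *
        (ϑ α Q * ϑ α (ϑ t (Q * a' * Q)) * ϑ α Q) := key
    _ = ϑ α (Q * ϑ t (Q * a * Q) * Q) * ϑ α (Q * ϑ t (Q * a' * Q) * Q) := by
        rw [← map_mul, ← map_mul, ← map_mul, ← map_mul]
    _ = ϑ α ((Q * ϑ t a * Q) * (Q * ϑ t a' * Q)) := by
        rw [compress, compress, ← map_mul]
end
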